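/- arXiv:2601.11829 — 5 statements merged into one kernel-verified Lean document; each statement's English description precedes it below -/
import Mathlib

section
/- For every positive integer n, real a, and complex z, the identity (cos(z/n) + i·a·sin(z/n))^n = Σ_{j=0}^{n} C_j(n,a) · exp(i·z·(1 - 2j/n)) holds, where C_j(n,a) = (n choose j)((1+a)/2)^(n-j)((1-a)/2)^j. -/
theorem superoscillation_fourier_expansion (n : ℕ) (hn : 0 < n) (a : ℝ) (z : ℂ) :
    (Complex.cos (z / n) + Complex.I * (a : ℂ) * Complex.sin (z / n)) ^ n =
      ∑ j ∈ Finset.range (n + 1),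
        ((n.choose j : ℂ) * ((1 + (a : ℂ)) / 2) ^ (n - j) * ((1 - (a : ℂ)) / 2) ^ j) *
          Complex.exp (Complex.I * z * (1 - 2 * (j : ℂ) / (n : ℂ))) := by
  have hn' : (n : ℂ) ≠ 0 := Nat.cast_ne_zero.mpr hn.ne'
  set w : ℂ := z / n with hw
  have hA : Complex.cos w + Complex.I * (a : ℂ) * Complex.sin w =
      ((1 - (a : ℂ)) / 2) * Complex.exp (-w * Complex.I) +
      ((1 + (a : ℂ)) / 2) * Complex.exp (w * Complex.I) := by
    rw [Complex.cos, Complex.sin]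
    linear_combination ((a : ℂ) / 2 *
      (Complex.exp (-w * Complex.I) - Complex.exp (w * Complex.I))) * Complex.I_sq
  rw [hA, add_pow]
  refine Finset.sum_congr rfl fun j hj => ?_
  have hjn : j ≤ n := Nat.lt_succ_iff.mp (Finset.mem_range.mp hj)
  have hexp : Complex.exp ((↑(n - j) : ℂ) * (w * Complex.I)) *
      Complex.exp ((j : ℂ) * -w * Complex.I) =
      Complex.exp (Complex.I * z * (1 - 2 * (j : ℂ) / (n : ℂ))) := by
    rw [← Complex.exp_add]
    congr 1
    rw [Nat.cast_sub hjn, hw]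
    field_simp
    ring
  calc ((1 - (a : ℂ)) / 2 * Complex.exp (-w * Complex.I)) ^ j *
        ((1 + (a : ℂ)) / 2 * Complex.exp (w * Complex.I)) ^ (n - j) * (n.choose j : ℂ)
      = ((n.choose j : ℂ) * ((1 + (a : ℂ)) / 2) ^ (n - j) * ((1 - (a : ℂ)) / 2) ^ j) *
        (Complex.exp ((↑(n - j) : ℂ) * (w * Complex.I)) *
          Complex.exp ((j : ℂ) * -w * Complex.I)) := by
        rw [mul_pow, mul_pow, ← Complex.exp_nat_mul, ← Complex.exp_nat_mul]; ring
    _ = _ := by rw [hexp]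
end

section
/- For every real a > 1 and every complex z, the sequence F_n(z,a) = (cos(z/n) + i·a·sin(z/n))^n converges to exp(i·a·z) as n → ∞, and the convergence is uniform on compact subsets of ℂ. -/
open Filter Complex

private lemma pow_sub_pow_abs_le (u v : ℂ) (B : ℝ) (n : ℕ)
    (hu : ‖u‖ ≤ B) (hv : ‖v‖ ≤ B) (hB : 0 ≤ B) :
    ‖u ^ n - v ^ n‖ ≤ n * B ^ (n - 1) * ‖u - v‖ := by
  rw [← geom_sum₂_mul, norm_mul]
  gcongr
  calc ‖∑ i ∈ Finset.range n, u ^ i * v ^ (n - 1 - i)‖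
      ≤ ∑ i ∈ Finset.range n, ‖u ^ i * v ^ (n - 1 - i)‖ := by
        exact norm_sum_le _ _
    _ ≤ ∑ i ∈ Finset.range n, B ^ (n - 1) := by
        apply Finset.sum_le_sum
        intro i hi
        rw [Finset.mem_range] at hi
        rw [norm_mul, norm_pow, norm_pow]
        calc ‖u‖ ^ i * ‖v‖ ^ (n - 1 - i)
            ≤ B ^ i * B ^ (n - 1 - i) := by
              gcongr
          _ = B ^ (n - 1) := by
              rw [← pow_add]
              congr 1
              omega
    _ = n * B ^ (n - 1) := by
        rw [Finset.sum_const, Finset.card_range, nsmul_eq_mul]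

private lemma local_estimate (a : ℝ) (ha : 1 < a) (w : ℂ)
    (hw : a * ‖w‖ ≤ 1) :
    ‖Complex.cos w + Complex.I * (a : ℂ) * Complex.sin w
      - Complex.exp (Complex.I * (a : ℂ) * w)‖ ≤ (a + a ^ 2) * ‖w‖ ^ 2 := by
  have ha0 : (0 : ℝ) < a := lt_trans one_pos ha
  have hw1 : ‖w‖ ≤ 1 := by
    nlinarith [norm_nonneg w]
  have key : Complex.cos w + Complex.I * (a : ℂ) * Complex.sin w
      - Complex.exp (Complex.I * (a : ℂ) * w)
      = ((1 + (a : ℂ)) / 2) * (Complex.exp (w * Complex.I) - 1 - w * Complex.I)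
        + ((1 - (a : ℂ)) / 2) * (Complex.exp (-w * Complex.I) - 1 - (-w * Complex.I))
        - (Complex.exp (Complex.I * (a : ℂ) * w) - 1 - Complex.I * (a : ℂ) * w) := by
    rw [Complex.cos, Complex.sin]
    ring_nf
    rw [Complex.I_sq]
    ring
  rw [key]
  have h1 : ‖Complex.exp (w * Complex.I) - 1 - w * Complex.I‖
      ≤ ‖w‖ ^ 2 := by
    have := Complex.norm_exp_sub_one_sub_id_le (x := w * Complex.I) (by simpa using hw1)
    simpa using this
  have h2 : ‖Complex.exp (-w * Complex.I) - 1 - (-w * Complex.I)‖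
      ≤ ‖w‖ ^ 2 := by
    have := Complex.norm_exp_sub_one_sub_id_le (x := -w * Complex.I) (by simpa using hw1)
    simpa using this
  have h3 : ‖Complex.exp (Complex.I * (a : ℂ) * w) - 1 - Complex.I * (a : ℂ) * w‖
      ≤ (a * ‖w‖) ^ 2 := by
    have habs : ‖Complex.I * (a : ℂ) * w‖ = a * ‖w‖ := by
      simp [Complex.norm_real, abs_of_pos ha0]
    have := Complex.norm_exp_sub_one_sub_id_le (x := Complex.I * (a : ℂ) * w)
      (by rw [habs]; exact hw)
    rwa [habs] at this
  have habs1 : ‖(1 + (a : ℂ)) / 2‖ = (1 + a) / 2 := by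
    rw [show (1 + (a : ℂ)) / 2 = (((1 + a) / 2 : ℝ) : ℂ) by push_cast; ring]
    rw [Complex.norm_real, Real.norm_eq_abs, abs_of_pos (by linarith)]
  have habs2 : ‖(1 - (a : ℂ)) / 2‖ = (a - 1) / 2 := by
    rw [show (1 - (a : ℂ)) / 2 = (((1 - a) / 2 : ℝ) : ℂ) by push_cast; ring]
    rw [Complex.norm_real, Real.norm_eq_abs, abs_of_neg (by linarith)]
    ring
  calc ‖_‖ ≤ ‖((1 + (a : ℂ)) / 2) * (Complex.exp (w * Complex.I) - 1 - w * Complex.I)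
        + ((1 - (a : ℂ)) / 2) * (Complex.exp (-w * Complex.I) - 1 - (-w * Complex.I))‖
        + ‖Complex.exp (Complex.I * (a : ℂ) * w) - 1 - Complex.I * (a : ℂ) * w‖ := by
        exact norm_sub_le _ _
    _ ≤ (‖(1 + (a : ℂ)) / 2‖ * ‖Complex.exp (w * Complex.I) - 1 - w * Complex.I‖
        + ‖(1 - (a : ℂ)) / 2‖ * ‖Complex.exp (-w * Complex.I) - 1 - (-w * Complex.I)‖)
        + (a * ‖w‖) ^ 2 := by
        gcongr
        calc _ ≤ ‖((1 + (a : ℂ)) / 2) * (Complex.exp (w * Complex.I) - 1 - w * Complex.I)‖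
              + ‖((1 - (a : ℂ)) / 2) * (Complex.exp (-w * Complex.I) - 1 - (-w * Complex.I))‖ :=
            norm_add_le _ _
          _ = _ := by rw [norm_mul, norm_mul]
    _ ≤ ((1 + a) / 2 * ‖w‖ ^ 2 + (a - 1) / 2 * ‖w‖ ^ 2)
        + (a * ‖w‖) ^ 2 := by
        rw [habs1, habs2]
        gcongr <;> linarith
    _ = (a + a ^ 2) * ‖w‖ ^ 2 := by ring

theorem supershift_property (a : ℝ) (ha : 1 < a) :
    (∀ z : ℂ,
      Tendsto (fun n : ℕ =>
          (Complex.cos (z / n) + Complex.I * (a : ℂ) * Complex.sin (z / n)) ^ n)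
        atTop (nhds (Complex.exp (Complex.I * (a : ℂ) * z)))) ∧
    (∀ K : Set ℂ, IsCompact K →
      TendstoUniformlyOn
        (fun (n : ℕ) (z : ℂ) =>
          (Complex.cos (z / n) + Complex.I * (a : ℂ) * Complex.sin (z / n)) ^ n)
        (fun z => Complex.exp (Complex.I * (a : ℂ) * z)) atTop K) := by
  have ha0 : (0 : ℝ) < a := lt_trans one_pos ha
  set C : ℝ := a + a ^ 2 with hC
  have hC0 : 0 < C := by positivity
  -- Main uniform estimate on closed balls
  have key : ∀ R : ℝ, 0 ≤ R → ∀ n : ℕ, 1 ≤ n → a * R ≤ n →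
      ∀ z : ℂ, ‖z‖ ≤ R →
      ‖(Complex.cos (z / n) + Complex.I * (a : ℂ) * Complex.sin (z / n)) ^ n
        - Complex.exp (Complex.I * (a : ℂ) * z)‖
      ≤ Real.exp (a * R + C * R ^ 2) * C * R ^ 2 / n := by
    intro R hR n hn hnR z hz
    have hn0 : (0 : ℝ) < n := by exact_mod_cast hn
    have hnC : (n : ℂ) ≠ 0 := by exact_mod_cast hn0.ne'
    set w : ℂ := z / n with hwdef
    have hwabs : ‖w‖ ≤ R / n := by
      rw [hwdef, norm_div]
      gcongr
      simpa using hn0.le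
    have haw : a * ‖w‖ ≤ 1 := by
      calc a * ‖w‖ ≤ a * (R / n) := by gcongr
        _ ≤ 1 := by rw [← mul_div_assoc, div_le_one hn0]; linarith
    set u : ℂ := Complex.cos w + Complex.I * (a : ℂ) * Complex.sin w with hu
    set v : ℂ := Complex.exp (Complex.I * (a : ℂ) * w) with hv
    have hexp_eq : Complex.exp (Complex.I * (a : ℂ) * z) = v ^ n := by
      rw [hv, ← Complex.exp_nat_mul]
      congr 1
      rw [hwdef]
      field_simp
    have hdiff : ‖u - v‖ ≤ C * (R / n) ^ 2 := by
      calc ‖u - v‖ ≤ C * ‖w‖ ^ 2 := local_estimate a ha w haw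
        _ ≤ C * (R / n) ^ 2 := by gcongr
    have hvabs : ‖v‖ ≤ Real.exp (a * R / n) := by
      rw [hv, Complex.norm_exp]
      apply Real.exp_le_exp.mpr
      have : (Complex.I * (a : ℂ) * w).re = -(a * w.im) := by
        simp [Complex.mul_re, Complex.mul_im]
      rw [this]
      calc -(a * w.im) ≤ a * |w.im| := by
            rw [neg_le]
            calc -(a * |w.im|) ≤ a * w.im := by nlinarith [neg_abs_le w.im]
              _ ≤ a * w.im := le_refl _
        _ ≤ a * ‖w‖ := by gcongr; exact Complex.abs_im_le_norm w
        _ ≤ a * (R / n) := by gcongr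
        _ = a * R / n := by ring
    obtain ⟨B, hB⟩ : ∃ B : ℝ, B = Real.exp (a * R / n) + C * (R / n) ^ 2 := ⟨_, rfl⟩
    have hB1 : (1 : ℝ) ≤ B := by
      have : (1 : ℝ) ≤ Real.exp (a * R / n) := Real.one_le_exp (by positivity)
      have h2 : 0 ≤ C * (R / n) ^ 2 := by positivity
      linarith
    have huabs : ‖u‖ ≤ B := by
      calc ‖u‖ ≤ ‖u - v‖ + ‖v‖ := by
            simpa using norm_add_le (u - v) v
        _ ≤ C * (R / n) ^ 2 + Real.exp (a * R / n) := add_le_add hdiff hvabs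
        _ = B := by rw [hB]; ring
    have hvabs' : ‖v‖ ≤ B := by
      have : 0 ≤ C * (R / n) ^ 2 := by positivity
      linarith
    have hBle : B ≤ Real.exp (a * R / n + C * (R / n) ^ 2) := by
      rw [Real.exp_add]
      have h1 : (1 : ℝ) ≤ Real.exp (a * R / n) := Real.one_le_exp (by positivity)
      have h2 := Real.add_one_le_exp (C * (R / n) ^ 2)
      have ht : (0:ℝ) ≤ C * (R / n) ^ 2 := by positivity
      nlinarith
    have hBpow : B ^ (n - 1) ≤ Real.exp (a * R + C * R ^ 2) := by
      calc B ^ (n - 1) ≤ B ^ n := pow_le_pow_right₀ hB1 (Nat.sub_le n 1)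
        _ ≤ Real.exp (a * R / n + C * (R / n) ^ 2) ^ n := by
            gcongr
        _ = Real.exp (n * (a * R / n + C * (R / n) ^ 2)) := by
            rw [← Real.exp_nat_mul]
        _ ≤ Real.exp (a * R + C * R ^ 2) := by
            apply Real.exp_le_exp.mpr
            have e1 : (n : ℝ) * (a * R / n) = a * R := by field_simp
            have e2 : (n : ℝ) * (C * (R / n) ^ 2) = C * R ^ 2 / n := by
              field_simp
            rw [mul_add, e1, e2]
            have hn1 : (1:ℝ) ≤ n := by exact_mod_cast hn
            have : C * R ^ 2 / n ≤ C * R ^ 2 := by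
              rw [div_le_iff₀ hn0]
              nlinarith [mul_le_mul_of_nonneg_left hn1 (by positivity : (0:ℝ) ≤ C * R ^ 2)]
            linarith
    calc ‖u ^ n - Complex.exp (Complex.I * (a : ℂ) * z)‖
        = ‖u ^ n - v ^ n‖ := by rw [hexp_eq]
      _ ≤ n * B ^ (n - 1) * ‖u - v‖ :=
          pow_sub_pow_abs_le u v B n huabs hvabs' (by linarith)
      _ ≤ n * Real.exp (a * R + C * R ^ 2) * (C * (R / n) ^ 2) := by
          gcongr
      _ = Real.exp (a * R + C * R ^ 2) * C * R ^ 2 / n := by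
          field_simp
  -- Uniform convergence on compacts
  have unif : ∀ K : Set ℂ, IsCompact K →
      TendstoUniformlyOn
        (fun (n : ℕ) (z : ℂ) =>
          (Complex.cos (z / n) + Complex.I * (a : ℂ) * Complex.sin (z / n)) ^ n)
        (fun z => Complex.exp (Complex.I * (a : ℂ) * z)) atTop K := by
    intro K hK
    obtain ⟨r, hr⟩ := hK.isBounded.subset_closedBall 0
    set R : ℝ := max r 0 with hRdef
    have hR0 : 0 ≤ R := le_max_right _ _
    have hKR : ∀ z ∈ K, ‖z‖ ≤ R := by
      intro z hz
      have := hr hz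
      rw [Metric.mem_closedBall, Complex.dist_eq, sub_zero] at this
      exact this.trans (le_max_left _ _)
    set M : ℝ := Real.exp (a * R + C * R ^ 2) * C * R ^ 2 with hM
    have hM0 : 0 ≤ M := by positivity
    rw [Metric.tendstoUniformlyOn_iff]
    intro ε hε
    have hlim : Tendsto (fun n : ℕ => M / n) atTop (nhds 0) :=
      tendsto_const_div_atTop_nhds_zero_nat M
    filter_upwards [eventually_ge_atTop 1, eventually_ge_atTop ⌈a * R⌉₊,
      hlim.eventually (gt_mem_nhds hε)] with n hn1 hn2 hn3 z hzK
    rw [Complex.dist_eq]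
    have hnR : a * R ≤ n := by
      calc a * R ≤ (⌈a * R⌉₊ : ℝ) := Nat.le_ceil _
        _ ≤ n := by exact_mod_cast hn2
    have := key R hR0 n hn1 hnR z (hKR z hzK)
    calc ‖_‖ = ‖((Complex.cos (z / n) + Complex.I * (a : ℂ) * Complex.sin (z / n)) ^ n
          - Complex.exp (Complex.I * (a : ℂ) * z))‖ := by
          rw [← norm_neg]; congr 1; ring
      _ ≤ M / n := this
      _ < ε := hn3
  exact ⟨fun z => (unif {z} isCompact_singleton).tendsto_at rfl, unif⟩
end

section
/- For every nonnegative integer k and real a > 1, the limit as n → ∞ of Σ_{j=0}^{n} C_j(n,a) · i^k · (1 - 2j/n)^k equals (i·a)^k, where C_j(n,a) = (n choose j)((1+a)/2)^(n-j)((1-a)/2)^j. -/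
open Filter
open Finset

noncomputable def Tm (p q : ℂ) (n k : ℕ) : ℂ :=
  ∑ j ∈ range (n+1), (n.choose j : ℂ) * p^(n-j) * q^j * ((n:ℂ) - 2*j)^k

lemma Tm_zero (p q : ℂ) (hpq : p + q = 1) (n : ℕ) : Tm p q n 0 = 1 := by
  unfold Tm
  simp only [pow_zero, mul_one]
  have : ∑ j ∈ range (n+1), (n.choose j : ℂ) * p^(n-j) * q^j
      = ∑ j ∈ range (n+1), q^j * p^(n-j) * (n.choose j : ℂ) := by
    exact sum_congr rfl fun j _ => by ring
  rw [this, ← add_pow, show q + p = 1 by rw [add_comm]; exact hpq, one_pow]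

lemma Tm_rec (p q : ℂ) (n k : ℕ) :
    Tm p q (n+1) (k+1) = ((n:ℂ)+1) * ∑ m ∈ range (k+1),
      (k.choose m : ℂ) * (p - (-1)^(k-m) * q) * Tm p q n m := by
  have hA : ∀ j ∈ range (n+2), ((n+1).choose j : ℂ) * (((n:ℂ)+1) - j)
      = ((n:ℂ)+1) * (n.choose j : ℂ) := by
    intro j hj
    rw [mem_range] at hj
    have hj' : j ≤ n + 1 := by omega
    have hnat : (n+1).choose j * (n + 1 - j) = n.choose j * (n+1) :=
      (Nat.choose_mul_succ_eq n j).symm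
    have := congrArg (Nat.cast : ℕ → ℂ) hnat
    push_cast [Nat.cast_sub hj'] at this
    rw [show ((n:ℂ)+1) - j = (↑n + 1 - ↑j) by ring, this]; ring
  have hB : ∀ j : ℕ, ((n+1).choose (j+1) : ℂ) * ((j:ℂ)+1)
      = ((n:ℂ)+1) * (n.choose j : ℂ) := by
    intro j
    have hnat : (n+1) * n.choose j = (n+1).choose (j+1) * (j+1) :=
      Nat.add_one_mul_choose_eq n j
    have := congrArg (Nat.cast : ℕ → ℂ) hnat
    push_cast at this
    rw [show ((j:ℂ)+1) = ((j:ℕ):ℂ) + 1 by push_cast; ring] at *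
    linear_combination -this
  -- step 1
  have step1 : Tm p q (n+1) (k+1) = ∑ j ∈ range (n+1),
      ((n:ℂ)+1) * (n.choose j : ℂ) * p^(n-j) * q^j *
        (p * (((n:ℂ)-2*j)+1)^k - q * (((n:ℂ)-2*j)-1)^k) := by
    unfold Tm
    have split : ∀ j ∈ range (n+2),
        ((n+1).choose j : ℂ) * p^(n+1-j) * q^j * (((n+1:ℕ):ℂ) - 2*j)^(k+1)
        = (((n:ℂ)+1) * (n.choose j : ℂ) * p^(n+1-j) * q^j * (((n:ℂ)+1) - 2*j)^k
          - ((n+1).choose j : ℂ) * (j:ℂ) * p^(n+1-j) * q^j * (((n:ℂ)+1) - 2*j)^k) := by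
      intro j hj
      have h := hA j hj
      push_cast
      rw [pow_succ]
      linear_combination (p^(n+1-j) * q^j * (((n:ℂ)+1) - 2*j)^k) * h
    rw [sum_congr rfl split, sum_sub_distrib]
    -- first sum: drop last term
    rw [sum_range_succ]
    have hlast : ((n:ℂ)+1) * (n.choose (n+1) : ℂ) * p^(n+1-(n+1)) * q^(n+1) *
        (((n:ℂ)+1) - 2*(n+1:ℕ))^k = 0 := by
      simp [Nat.choose_succ_self]
    rw [hlast, add_zero]
    -- second sum: peel first term
    rw [sum_range_succ' (fun j => ((n+1).choose j : ℂ) * (j:ℂ) * p^(n+1-j) * q^j *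
        (((n:ℂ)+1) - 2*(j:ℕ))^k) (n+1)]
    have hfirst : ((n+1).choose 0 : ℂ) * ((0:ℕ):ℂ) * p^(n+1-0) * q^0 *
        (((n:ℂ)+1) - 2*(0:ℕ))^k = 0 := by simp
    rw [hfirst, add_zero]
    rw [← sum_sub_distrib]
    refine sum_congr rfl fun j hj => ?_
    rw [mem_range] at hj
    have hj' : j ≤ n := by omega
    have hp1 : n + 1 - j = (n - j) + 1 := by omega
    have hp2 : n + 1 - (j+1) = n - j := by omega
    rw [hp1, hp2]
    push_cast
    linear_combination (- p^(n-j) * q^(j+1) * (((n:ℂ)+1) - 2*((j:ℂ)+1))^k) * hB j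
  rw [step1]
  -- step 2: binomial expansion pointwise
  have step2 : ∀ Y : ℂ, p * (Y+1)^k - q * (Y-1)^k
      = ∑ m ∈ range (k+1), (k.choose m : ℂ) * (p - (-1)^(k-m) * q) * Y^m := by
    intro Y
    rw [show Y - 1 = Y + (-1) by ring, add_pow, add_pow, mul_sum, mul_sum,
      ← sum_sub_distrib]
    refine sum_congr rfl fun m hm => ?_
    ring
  have step3 : ∀ j : ℕ,
      ((n:ℂ)+1) * (n.choose j : ℂ) * p^(n-j) * q^j *
        (p * (((n:ℂ)-2*j)+1)^k - q * (((n:ℂ)-2*j)-1)^k)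
      = ∑ m ∈ range (k+1), ((n:ℂ)+1) * ((k.choose m : ℂ) * (p - (-1)^(k-m) * q))
          * ((n.choose j : ℂ) * p^(n-j) * q^j * ((n:ℂ)-2*j)^m) := by
    intro j
    rw [step2, mul_sum]
    exact sum_congr rfl fun m _ => by ring
  rw [sum_congr rfl fun j _ => step3 j, sum_comm]
  rw [mul_sum]
  refine sum_congr rfl fun m _ => ?_
  unfold Tm
  rw [mul_sum, mul_sum]
  exact sum_congr rfl fun j _ => by ring

lemma aux_lim (m k : ℕ) (hm : m ≤ k) :
    Tendsto (fun n : ℕ => (n:ℂ)^m / ((n:ℂ)+1)^k) atTop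
      (nhds (if m = k then 1 else 0)) := by
  have h0 : Tendsto (fun n : ℕ => ((n:ℝ)+1)⁻¹) atTop (nhds 0) := by
    simpa using tendsto_one_div_add_atTop_nhds_zero_nat (𝕜 := ℝ)
  have h1 : Tendsto (fun n : ℕ => (n:ℝ)/((n:ℝ)+1)) atTop (nhds 1) := by
    have heq : (fun n : ℕ => (n:ℝ)/((n:ℝ)+1)) = fun n : ℕ => 1 - ((n:ℝ)+1)⁻¹ := by
      funext n
      have hne : (n:ℝ)+1 ≠ 0 := by positivity
      field_simp
      ring
    rw [heq]
    simpa using (tendsto_const_nhds (x := (1:ℝ))).sub h0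
  have hreal : Tendsto (fun n : ℕ => (n:ℝ)^m / ((n:ℝ)+1)^k) atTop
      (nhds ((0:ℝ)^(k-m))) := by
    have h2 := ((h1.pow m).mul (h0.pow (k-m)))
    rw [one_pow, one_mul] at h2
    refine h2.congr fun n => ?_
    have hne : (n:ℝ)+1 ≠ 0 := by positivity
    have hk : (((n:ℝ)+1))^k = ((n:ℝ)+1)^m * ((n:ℝ)+1)^(k-m) := by
      rw [← pow_add, Nat.add_sub_cancel' hm]
    rw [div_pow, inv_pow, hk]
    field_simp
  have hval : ((((0:ℝ)^(k-m) : ℝ)) : ℂ) = (if m = k then (1:ℂ) else 0) := by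
    rcases eq_or_lt_of_le hm with h | h
    · simp [h, Nat.sub_self]
    · have hne : k - m ≠ 0 := by omega
      simp [zero_pow hne, Nat.ne_of_lt h]
  have hc := (Complex.continuous_ofReal.tendsto _).comp hreal
  rw [hval] at hc
  refine hc.congr fun n => ?_
  simp only [Function.comp_apply]
  push_cast
  ring

lemma Tm_tendsto (p q : ℂ) (hpq : p + q = 1) (k : ℕ) :
    Tendsto (fun n : ℕ => Tm p q n k / (n:ℂ)^k) atTop (nhds ((p - q)^k)) := by
  induction k using Nat.strong_induction_on with
  | _ k IH =>
    match k with
    | 0 =>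
      simp only [pow_zero, div_one]
      refine Tendsto.congr (fun n => (Tm_zero p q hpq n).symm) tendsto_const_nhds
    | k + 1 =>
      rw [← tendsto_add_atTop_iff_nat 1]
      have key : Tendsto (fun n : ℕ => ∑ m ∈ range (k+1),
          (k.choose m : ℂ) * (p - (-1)^(k-m) * q) * (Tm p q n m / (n:ℂ)^m)
            * ((n:ℂ)^m / ((n:ℂ)+1)^k)) atTop
          (nhds (∑ m ∈ range (k+1), (k.choose m : ℂ) * (p - (-1)^(k-m) * q)
            * (p-q)^m * (if m = k then 1 else 0))) := by
        refine tendsto_finset_sum _ fun m hm => ?_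
        rw [mem_range] at hm
        have hmk : m ≤ k := by omega
        exact (((IH m (by omega)).const_mul _).mul (aux_lim m k hmk))
      have hsum : (∑ m ∈ range (k+1), (k.choose m : ℂ) * (p - (-1)^(k-m) * q)
            * (p-q)^m * (if m = k then 1 else 0)) = (p - q)^(k+1) := by
        rw [Finset.sum_eq_single k]
        · simp [pow_succ, mul_comm]
        · intro b _ hb; simp [hb]
        · intro h; exact absurd (self_mem_range_succ k) h
      rw [hsum] at key
      refine key.congr' ?_
      filter_upwards [eventually_ge_atTop 1] with n hn
      have hn0 : (n:ℂ) ≠ 0 := Nat.cast_ne_zero.mpr (by omega)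
      have hn1 : (n:ℂ) + 1 ≠ 0 := by
        have : ((n+1:ℕ):ℂ) ≠ 0 := Nat.cast_ne_zero.mpr (by omega)
        push_cast at this; exact this
      have hL : ∀ m ∈ range (k+1),
          (k.choose m : ℂ) * (p - (-1)^(k-m) * q) * (Tm p q n m / (n:ℂ)^m)
            * ((n:ℂ)^m / ((n:ℂ)+1)^k)
          = (k.choose m : ℂ) * (p - (-1)^(k-m) * q) * Tm p q n m / ((n:ℂ)+1)^k := by
        intro m _
        field_simp
      rw [sum_congr rfl hL]
      push_cast
      rw [Tm_rec, pow_succ, ← sum_div]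
      field_simp
      ring_nf
      exact sum_congr rfl fun x _ => by ring

theorem superoscillation_moments_limit (k : ℕ) (a : ℝ) (ha : 1 < a) :
    Tendsto (fun n : ℕ =>
        ∑ j ∈ Finset.range (n + 1),
          ((n.choose j : ℂ) * ((1 + (a : ℂ)) / 2) ^ (n - j) * ((1 - (a : ℂ)) / 2) ^ j) *
            Complex.I ^ k * (1 - 2 * (j : ℂ) / (n : ℂ)) ^ k)
      atTop (nhds ((Complex.I * (a : ℂ)) ^ k)) := by
  have hpq : ((1 + (a:ℂ))/2) + ((1 - (a:ℂ))/2) = 1 := by ring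
  have hdiff : ((1 + (a:ℂ))/2) - ((1 - (a:ℂ))/2) = (a:ℂ) := by ring
  have h := (Tm_tendsto ((1 + (a:ℂ))/2) ((1 - (a:ℂ))/2) hpq k).const_mul (Complex.I^k)
  rw [hdiff] at h
  rw [mul_pow]
  refine h.congr' ?_
  filter_upwards [eventually_ge_atTop 1] with n hn
  have hn0 : (n:ℂ) ≠ 0 := Nat.cast_ne_zero.mpr (by omega)
  unfold Tm
  rw [div_eq_mul_inv, sum_mul, mul_sum]
  refine sum_congr rfl fun j _ => ?_
  have hx : 1 - 2*(j:ℂ)/(n:ℂ) = ((n:ℂ) - 2*(j:ℂ))/(n:ℂ) := by field_simp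
  rw [hx, div_pow ((n:ℂ) - 2*(j:ℂ)) (n:ℂ) k]
  simp only [div_eq_mul_inv]
  generalize ((n:ℂ)^k)⁻¹ = t
  ring
end

section
/- Let a, b ∈ ℂ with Re(a) > 0, and let n be a nonnegative integer. Then ∫_{-∞}^{∞} x^n e^{-a x² + b x} dx = √(π/a) · e^{b²/(4a)} · (-i)^n · (1/(2√a))^n · H_n(i·b/(2√a)), where H_n is the n-th (physicists') Hermite polynomial and √a denotes the principal square root. -/
open MeasureTheory Filter


lemma norm_moment (a b : ℂ) (n : ℕ) (x : ℝ) :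
    ‖(x:ℂ)^n * Complex.exp (-a * (x:ℂ)^2 + b * (x:ℂ))‖ =
      |x|^n * Real.exp (-a.re * x^2 + b.re * x) := by
  rw [norm_mul]
  simp only [Complex.norm_exp]
  congr 1
  · simp [map_pow]
  · congr 1
    simp [Complex.add_re, Complex.mul_re, Complex.neg_re, ← Complex.ofReal_pow]

lemma pow_le_fact_exp (n : ℕ) {x : ℝ} (hx : 0 ≤ x) : x ^ n ≤ n.factorial * Real.exp x := by
  have h := Real.sum_le_exp_of_nonneg hx (n+1)
  have h2 : x ^ n / n.factorial ≤ ∑ i ∈ Finset.range (n+1), x ^ i / i.factorial :=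
    Finset.single_le_sum (f := fun i => x ^ i / i.factorial)
      (fun i _ => by positivity) (Finset.self_mem_range_succ n)
  have h3 : x ^ n / n.factorial ≤ Real.exp x := h2.trans h
  have hf : (0:ℝ) < n.factorial := by positivity
  calc x ^ n = n.factorial * (x ^ n / n.factorial) := by field_simp
    _ ≤ n.factorial * Real.exp x := mul_le_mul_of_nonneg_left h3 hf.le

lemma norm_bound (a b : ℂ) (n : ℕ) (x : ℝ) :
    ‖(x:ℂ)^n * Complex.exp (-a * (x:ℂ)^2 + b * (x:ℂ))‖ ≤
      (n.factorial : ℝ) * (Real.exp (-a.re * x^2 + (b.re+1) * x)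
        + Real.exp (-a.re * x^2 + (b.re-1) * x)) := by
  rw [norm_moment]
  have h1 : |x|^n ≤ (n.factorial : ℝ) * Real.exp |x| := pow_le_fact_exp n (abs_nonneg x)
  have h2 : Real.exp |x| ≤ Real.exp x + Real.exp (-x) := by
    rcases abs_cases x with ⟨h, _⟩ | ⟨h, _⟩ <;> rw [h] <;>
      nlinarith [Real.exp_pos x, Real.exp_pos (-x)]
  have hq := Real.exp_pos (-a.re * x^2 + b.re * x)
  have hf : (0:ℝ) ≤ n.factorial := by positivity
  calc |x|^n * Real.exp (-a.re * x^2 + b.re * x)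
      ≤ ((n.factorial : ℝ) * (Real.exp x + Real.exp (-x))) * Real.exp (-a.re * x^2 + b.re * x) := by
        apply mul_le_mul_of_nonneg_right _ hq.le
        exact h1.trans (by nlinarith)
    _ = (n.factorial : ℝ) * (Real.exp (-a.re * x^2 + (b.re+1) * x)
        + Real.exp (-a.re * x^2 + (b.re-1) * x)) := by
        rw [mul_assoc, add_mul, ← Real.exp_add, ← Real.exp_add]
        ring_nf


lemma integrable_exp_quad {α : ℝ} (hα : 0 < α) (c : ℝ) :
    Integrable fun x : ℝ => Real.exp (-α * x^2 + c * x) := by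
  have h := (integrable_cexp_quadratic (b := (α:ℂ)) (by simpa using hα) (c:ℂ) 0).norm
  refine h.congr (Filter.Eventually.of_forall fun x => ?_)
  dsimp only
  rw [Complex.norm_exp]
  congr 1
  simp [Complex.add_re, Complex.mul_re, ← Complex.ofReal_pow]

lemma integrable_moment (a b : ℂ) (ha : 0 < a.re) (n : ℕ) :
    Integrable fun x : ℝ => (x:ℂ)^n * Complex.exp (-a * (x:ℂ)^2 + b * (x:ℂ)) := by
  refine Integrable.mono'
    (((integrable_exp_quad ha (b.re+1)).add (integrable_exp_quad ha (b.re-1))).const_mul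
      (n.factorial : ℝ))
    (Continuous.aestronglyMeasurable (by fun_prop))
    (Filter.Eventually.of_forall (norm_bound a b n))

lemma tendsto_exp_quad {α : ℝ} (hα : 0 < α) (c : ℝ) :
    Tendsto (fun x : ℝ => Real.exp (-α * x^2 + c * x)) (atBot ⊔ atTop) (nhds 0) := by
  have hg : Tendsto (fun x : ℝ => Real.exp (-(α/2) * x^2)) (atBot ⊔ atTop) (nhds 0) := by
    have := tendsto_rpow_abs_mul_exp_neg_mul_sq_cocompact (half_pos hα) 0
    rw [cocompact_eq_atBot_atTop] at this
    simpa using this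
  refine squeeze_zero (fun x => (Real.exp_pos _).le) (fun x => ?_)
    (by simpa using hg.const_mul (Real.exp (c^2/(2*α))))
  rw [← Real.exp_add]
  apply Real.exp_le_exp.mpr
  have hd : c^2 = (c^2/(2*α))*(2*α) := by field_simp
  nlinarith [sq_nonneg (α * x - c), hα, hd]

lemma tendsto_moment (a b : ℂ) (ha : 0 < a.re) (n : ℕ) :
    Tendsto (fun x : ℝ => (x:ℂ)^n * Complex.exp (-a * (x:ℂ)^2 + b * (x:ℂ)))
      (atBot ⊔ atTop) (nhds 0) := by
  apply squeeze_zero_norm (norm_bound a b n)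
  simpa using ((tendsto_exp_quad ha (b.re+1)).add (tendsto_exp_quad ha (b.re-1))).const_mul
    ((n.factorial : ℝ))


lemma moment_recurrence (a b : ℂ) (ha : 0 < a.re) (n : ℕ) :
    2 * a * ∫ x : ℝ, (x:ℂ)^(n+1) * Complex.exp (-a * (x:ℂ)^2 + b * (x:ℂ)) =
      b * (∫ x : ℝ, (x:ℂ)^n * Complex.exp (-a * (x:ℂ)^2 + b * (x:ℂ))) +
      n * ∫ x : ℝ, (x:ℂ)^(n-1) * Complex.exp (-a * (x:ℂ)^2 + b * (x:ℂ)) := by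
  set E : ℝ → ℂ := fun x => Complex.exp (-a * (x:ℂ)^2 + b * (x:ℂ)) with hE
  set F : ℝ → ℂ := fun x => (x:ℂ)^n * E x with hF
  set G : ℝ → ℂ := fun x => (n:ℂ) * (x:ℂ)^(n-1) * E x + b * ((x:ℂ)^n * E x)
      - 2 * a * ((x:ℂ)^(n+1) * E x) with hG
  have hderiv : ∀ x : ℝ, HasDerivAt F (G x) x := by
    intro x
    have h1 : HasDerivAt (fun z : ℂ => -a * z^2 + b * z) (-a * (2 * (x:ℂ)^1) + b * 1) (x:ℂ) :=
      (((hasDerivAt_pow 2 (x:ℂ)).const_mul (-a)).add ((hasDerivAt_id (x:ℂ)).const_mul b))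
    have h2 := h1.cexp
    have h3 := (hasDerivAt_pow n (x:ℂ)).mul h2
    have h4 := h3.comp_ofReal
    convert h4 using 1
    · rfl
    simp only [hG, hE]
    push_cast
    ring
  have hGint : Integrable G := by
    have h := (((integrable_moment a b ha (n-1)).const_mul (n:ℂ)).add
        ((integrable_moment a b ha n).const_mul b)).sub
      ((integrable_moment a b ha (n+1)).const_mul (2*a))
    refine h.congr (Filter.Eventually.of_forall fun x => ?_)
    simp only [hG, hE, Pi.add_apply, Pi.sub_apply]
    ring
  have hint : (∫ x : ℝ, G x) =
      (n:ℂ) * (∫ x : ℝ, (x:ℂ)^(n-1) * E x) + b * (∫ x : ℝ, (x:ℂ)^n * E x)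
        - 2 * a * ∫ x : ℝ, (x:ℂ)^(n+1) * E x := by
    have hi1 : Integrable (fun x : ℝ => (n:ℂ) * ((x:ℂ)^(n-1) * E x)) :=
      (integrable_moment a b ha (n-1)).const_mul (n:ℂ)
    have hi2 : Integrable (fun x : ℝ => b * ((x:ℂ)^n * E x)) :=
      (integrable_moment a b ha n).const_mul b
    have hi3 : Integrable (fun x : ℝ => 2 * (a * ((x:ℂ)^(n+1) * E x))) :=
      ((integrable_moment a b ha (n+1)).const_mul a).const_mul 2
    have hi12 : Integrable (fun x : ℝ => (n:ℂ) * ((x:ℂ)^(n-1) * E x) + b * ((x:ℂ)^n * E x)) :=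
      hi1.add hi2
    rw [hG]
    simp_rw [mul_assoc]
    rw [integral_sub hi12 hi3, integral_add hi1 hi2,
      integral_const_mul, integral_const_mul, integral_const_mul, integral_const_mul]
  have hzero : (∫ x : ℝ, G x) = 0 := by
    have lim1 : Tendsto (fun R : ℝ => ∫ x in (-R)..R, G x) atTop (nhds (∫ x : ℝ, G x)) :=
      intervalIntegral_tendsto_integral hGint tendsto_neg_atTop_atBot tendsto_id
    have heq : ∀ R : ℝ, (∫ x in (-R)..R, G x) = F R - F (-R) := fun R =>
      intervalIntegral.integral_eq_sub_of_hasDerivAt (fun x _ => hderiv x)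
        hGint.intervalIntegrable
    have lim2 : Tendsto (fun R : ℝ => ∫ x in (-R)..R, G x) atTop (nhds 0) := by
      simp_rw [heq]
      have hT := (tendsto_moment a b ha n).mono_left le_sup_right
      have hB := ((tendsto_moment a b ha n).mono_left (le_sup_left : atBot ≤ atBot ⊔ atTop)).comp
        tendsto_neg_atTop_atBot
      have h5 : Tendsto (fun R : ℝ => F R - F (-R)) atTop (nhds (0 - 0)) := hT.sub hB
      simpa using h5
    exact tendsto_nhds_unique lim1 lim2
  rw [hint] at hzero
  linear_combination -hzero

/-- The physicists' Hermite polynomials: H₀ = 1, H₁(x) = 2x,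
H_{n+2}(x) = 2x H_{n+1}(x) - 2(n+1) H_n(x). -/
noncomputable def physHermite : ℕ → ℂ → ℂ
  | 0, _ => 1
  | 1, x => 2 * x
  | n + 2, x => 2 * x * physHermite (n + 1) x - 2 * (n + 1) * physHermite n x

theorem gaussian_moment_formula (a b : ℂ) (ha : 0 < a.re) (n : ℕ) :
    ∫ x : ℝ, (x : ℂ) ^ n * Complex.exp (-a * (x : ℂ) ^ 2 + b * (x : ℂ)) =
      ((Real.pi : ℂ) / a) ^ ((1 : ℂ) / 2) * Complex.exp (b ^ 2 / (4 * a)) * (-Complex.I) ^ n *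
        (1 / (2 * a ^ ((1 : ℂ) / 2))) ^ n *
        physHermite n (Complex.I * b / (2 * a ^ ((1 : ℂ) / 2))) := by
  have ha0 : a ≠ 0 := fun h => by simp [h] at ha
  set s : ℂ := a ^ ((1:ℂ)/2) with hsdef
  have hs : s * s = a := by
    rw [hsdef, ← Complex.cpow_add _ _ ha0]
    norm_num
  have hs0 : s ≠ 0 := fun h => ha0 (by rw [← hs, h, mul_zero])
  have ha2 : (2:ℂ) * a ≠ 0 := by simp [ha0]
  set C : ℂ := ((Real.pi : ℂ) / a) ^ ((1 : ℂ) / 2) * Complex.exp (b ^ 2 / (4 * a)) with hC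
  have base : (∫ x : ℝ, (x : ℂ) ^ 0 * Complex.exp (-a * (x : ℂ) ^ 2 + b * (x : ℂ))) = C := by
    have h := integral_cexp_quadratic (b := -a) (by simpa using ha) b 0
    simp only [add_zero, neg_neg, zero_sub, pow_zero, one_mul, mul_neg, div_neg] at h
    simp only [pow_zero, one_mul]
    rw [h, hC]
  -- the recurrence in divided form
  have hrec : ∀ m : ℕ, (∫ x : ℝ, (x:ℂ)^(m+1) * Complex.exp (-a * (x:ℂ)^2 + b * (x:ℂ))) =
      (b * (∫ x : ℝ, (x:ℂ)^m * Complex.exp (-a * (x:ℂ)^2 + b * (x:ℂ))) +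
       m * ∫ x : ℝ, (x:ℂ)^(m-1) * Complex.exp (-a * (x:ℂ)^2 + b * (x:ℂ))) / (2*a) := by
    intro m
    rw [eq_div_iff ha2, mul_comm _ (2*a)]
    exact moment_recurrence a b ha m
  induction n using Nat.twoStepInduction with
  | zero =>
    rw [base]
    simp [physHermite]
  | one =>
    rw [hrec 0]
    simp only [Nat.cast_zero, zero_mul, add_zero, base]
    show (b * C) / (2*a) = C * (-Complex.I)^1 * (1/(2*s))^1 * physHermite 1 (Complex.I * b / (2*s))
    simp only [physHermite, pow_one]
    field_simp
    rw [← hs]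
    ring_nf
    rw [Complex.I_sq]
    ring
  | more m ih1 ih2 =>
    rw [hrec (m+1)]
    simp only [Nat.add_sub_cancel]
    rw [ih1, ih2]
    show _ = C * (-Complex.I)^(m+2) * (1/(2*s))^(m+2) * physHermite (m+2) (Complex.I * b / (2*s))
    simp only [physHermite]
    push_cast
    field_simp
    rw [← hs]
    ring_nf
    simp only [Complex.I_sq, show Complex.I^3 = -Complex.I from by
      rw [pow_succ, Complex.I_sq]; ring]
    field_simp
    ring
end

section
/- For ε > 0, t ∈ ℝ, x ∈ ℝ, and m ∈ ℕ, one has ∫_ℝ λ^m e^{-(it+ε)λ² + iλx} dλ = i^{-m} · 2^{-m} · √π · (it+ε)^{-(m+1)/2} · exp(-x²/(4(it+ε))) · H_m(-x/(2√(it+ε))), where H_m is the m-th physicists' Hermite polynomial and powers/square roots use the principal branch. -/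
open MeasureTheory

namespace OscIntAux

open Complex Filter Topology

lemma norm_integrand (b : ℂ) (x l : ℝ) (k : ℕ) :
    ‖(l:ℂ)^k * Complex.exp (-b * (l:ℂ)^2 + I * l * x)‖
      = |l|^k * Real.exp (-b.re * l^2) := by
  have hre : (-b * (l:ℂ)^2 + I * (l:ℂ) * (x:ℂ)).re = -b.re * l^2 := by
    simp only [← Complex.ofReal_pow, Complex.add_re, Complex.mul_re, Complex.neg_re,
      Complex.neg_im, Complex.ofReal_re, Complex.ofReal_im, Complex.I_re, Complex.I_im,
      Complex.mul_im]
    ring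
  rw [norm_mul, norm_pow, Complex.norm_real, Real.norm_eq_abs,
    Complex.norm_exp, hre]

lemma integrable_pow_mul (b : ℂ) (hb : 0 < b.re) (x : ℝ) (k : ℕ) :
    Integrable fun l : ℝ => (l:ℂ)^k * Complex.exp (-b * (l:ℂ)^2 + I * l * x) := by
  have hmeas : AEStronglyMeasurable
      (fun l : ℝ => (l:ℂ)^k * Complex.exp (-b * (l:ℂ)^2 + I * l * x)) volume := by
    apply Continuous.aestronglyMeasurable
    continuity
  have hg : Integrable (fun l : ℝ => |l^k * Real.exp (-b.re * l^2)|) := by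
    exact (integrable_rpow_mul_exp_neg_mul_sq hb
      (lt_of_lt_of_le neg_one_lt_zero (Nat.cast_nonneg k) : (-1:ℝ) < k)).abs.congr
      (by filter_upwards with l; rw [Real.rpow_natCast])
  refine Integrable.mono' hg hmeas ?_
  filter_upwards with l
  rw [norm_integrand, abs_mul, _root_.abs_pow, _root_.abs_of_nonneg (Real.exp_pos _).le]

lemma tendsto_integrand_top (b : ℂ) (hb : 0 < b.re) (x : ℝ) (k : ℕ) :
    Tendsto (fun l : ℝ => (l:ℂ)^k * Complex.exp (-b * (l:ℂ)^2 + I * l * x)) atTop (𝓝 0) := by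
  have h := tendsto_rpow_abs_mul_exp_neg_mul_sq_cocompact hb (k : ℝ)
  have h' : Tendsto (fun l : ℝ => |l|^k * Real.exp (-b.re * l^2)) (cocompact ℝ) (𝓝 0) := by
    refine h.congr fun l => ?_
    rw [Real.rpow_natCast]
  have h2 := h'.mono_left (atTop_le_cocompact)
  rw [tendsto_zero_iff_norm_tendsto_zero]
  refine h2.congr fun l => ?_
  rw [norm_integrand]

lemma tendsto_integrand_bot (b : ℂ) (hb : 0 < b.re) (x : ℝ) (k : ℕ) :
    Tendsto (fun l : ℝ => (l:ℂ)^k * Complex.exp (-b * (l:ℂ)^2 + I * l * x)) atBot (𝓝 0) := by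
  have h := tendsto_rpow_abs_mul_exp_neg_mul_sq_cocompact hb (k : ℝ)
  have h' : Tendsto (fun l : ℝ => |l|^k * Real.exp (-b.re * l^2)) (cocompact ℝ) (𝓝 0) := by
    refine h.congr fun l => ?_
    rw [Real.rpow_natCast]
  have h2 := h'.mono_left (atBot_le_cocompact)
  rw [tendsto_zero_iff_norm_tendsto_zero]
  refine h2.congr fun l => ?_
  rw [norm_integrand]

lemma hasDerivAt_integrand (b : ℂ) (x : ℝ) (k : ℕ) (l : ℝ) :
    HasDerivAt (fun l : ℝ => (l:ℂ)^k * Complex.exp (-b * (l:ℂ)^2 + I * l * x))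
      ((k:ℂ)*(l:ℂ)^(k-1) * Complex.exp (-b * (l:ℂ)^2 + I * l * x)
        + (l:ℂ)^k * (-2*b*l + I*x) * Complex.exp (-b * (l:ℂ)^2 + I * l * x)) l := by
  have h1 : HasDerivAt (fun z : ℂ => z^k * Complex.exp (-b * z^2 + I * z * x))
      ((k:ℂ)*(l:ℂ)^(k-1) * Complex.exp (-b * (l:ℂ)^2 + I * (l:ℂ) * x)
        + (l:ℂ)^k * (Complex.exp (-b * (l:ℂ)^2 + I * (l:ℂ) * x) * (-2*b*(l:ℂ) + I*x))) (l:ℂ) := by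
    have hp : HasDerivAt (fun z : ℂ => z ^ k) ((k:ℂ) * (l:ℂ)^(k-1)) (l:ℂ) := hasDerivAt_pow k _
    have harg : HasDerivAt (fun z : ℂ => -b * z^2 + I * z * x) (-2*b*(l:ℂ) + I*x) (l:ℂ) := by
      have h2 : HasDerivAt (fun z : ℂ => -b * z^2) (-b * (2 * (l:ℂ))) (l:ℂ) := by
        simpa using ((hasDerivAt_pow 2 (l:ℂ)).const_mul (-b))
      have h3 : HasDerivAt (fun z : ℂ => I * z * x) (I * x) (l:ℂ) := by
        have := (hasDerivAt_id (l:ℂ)).const_mul I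
        simpa [mul_comm, mul_assoc, mul_left_comm] using this.mul_const (x:ℂ)
      exact (h2.add h3).congr_deriv (by ring)
    exact hp.mul (harg.cexp)
  have := h1.comp_ofReal
  convert this using 1
  ring

lemma integral_deriv_zero (b : ℂ) (hb : 0 < b.re) (x : ℝ) (k : ℕ) :
    ∫ l : ℝ, ((k:ℂ)*(l:ℂ)^(k-1) * Complex.exp (-b * (l:ℂ)^2 + I * l * x)
      + (l:ℂ)^k * (-2*b*l + I*x) * Complex.exp (-b * (l:ℂ)^2 + I * l * x)) = 0 := by
  set f : ℝ → ℂ := fun l => (l:ℂ)^k * Complex.exp (-b * (l:ℂ)^2 + I * l * x) with hf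
  set f' : ℝ → ℂ := fun l => (k:ℂ)*(l:ℂ)^(k-1) * Complex.exp (-b * (l:ℂ)^2 + I * l * x)
      + (l:ℂ)^k * (-2*b*l + I*x) * Complex.exp (-b * (l:ℂ)^2 + I * l * x) with hf'
  have hderiv : ∀ l : ℝ, HasDerivAt f (f' l) l := hasDerivAt_integrand b x k
  have hint : Integrable f' := by
    have h0 := ((integrable_pow_mul b hb x (k-1)).const_mul (k:ℂ))
    have h1 := ((integrable_pow_mul b hb x (k+1)).const_mul (-2*b))
    have h2 := ((integrable_pow_mul b hb x k).const_mul (I*x))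
    refine ((h0.add h1).add h2).congr ?_
    filter_upwards with l
    simp only [hf', Pi.add_apply]
    ring
  have hIic : ∫ l in Set.Iic (0:ℝ), f' l = f 0 - 0 :=
    integral_Iic_of_hasDerivAt_of_tendsto' (fun l _ => hderiv l) hint.integrableOn
      (tendsto_integrand_bot b hb x k)
  have hIoi : ∫ l in Set.Ioi (0:ℝ), f' l = 0 - f 0 :=
    integral_Ioi_of_hasDerivAt_of_tendsto' (fun l _ => hderiv l) hint.integrableOn
      (tendsto_integrand_top b hb x k)
  rw [← intervalIntegral.integral_Iic_add_Ioi (hint.integrableOn) (hint.integrableOn), hIic, hIoi]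
  ring

/-- the recursion for the integrals -/
lemma J_rec (b : ℂ) (hb : 0 < b.re) (x : ℝ) (k : ℕ) :
    (∫ l : ℝ, (l:ℂ)^(k+1) * Complex.exp (-b * (l:ℂ)^2 + I * l * x))
      = ((k:ℂ) * (∫ l : ℝ, (l:ℂ)^(k-1) * Complex.exp (-b * (l:ℂ)^2 + I * l * x))
          + I*x * (∫ l : ℝ, (l:ℂ)^k * Complex.exp (-b * (l:ℂ)^2 + I * l * x))) / (2*b) := by
  have hb0 : b ≠ 0 := fun h => by simp [h] at hb
  have h0 := (integrable_pow_mul b hb x (k-1)).const_mul (k:ℂ)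
  have h1 := (integrable_pow_mul b hb x (k+1)).const_mul (-2*b)
  have h2 := (integrable_pow_mul b hb x k).const_mul (I*x)
  have key := integral_deriv_zero b hb x k
  have hsplit : ∫ l : ℝ, ((k:ℂ)*(l:ℂ)^(k-1) * Complex.exp (-b * (l:ℂ)^2 + I * l * x)
      + (l:ℂ)^k * (-2*b*l + I*x) * Complex.exp (-b * (l:ℂ)^2 + I * l * x))
      = (k:ℂ) * (∫ l : ℝ, (l:ℂ)^(k-1) * Complex.exp (-b * (l:ℂ)^2 + I * l * x))
        + ((-2*b) * (∫ l : ℝ, (l:ℂ)^(k+1) * Complex.exp (-b * (l:ℂ)^2 + I * l * x))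
          + (I*x) * (∫ l : ℝ, (l:ℂ)^k * Complex.exp (-b * (l:ℂ)^2 + I * l * x))) := by
    have hcongr : (∫ l : ℝ, ((k:ℂ)*(l:ℂ)^(k-1) * Complex.exp (-b * (l:ℂ)^2 + I * l * x)
        + (l:ℂ)^k * (-2*b*l + I*x) * Complex.exp (-b * (l:ℂ)^2 + I * l * x)))
        = ∫ l : ℝ, ((k:ℂ) * ((l:ℂ)^(k-1) * Complex.exp (-b * (l:ℂ)^2 + I * l * x))
          + ((-2*b) * ((l:ℂ)^(k+1) * Complex.exp (-b * (l:ℂ)^2 + I * l * x))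
            + (I*(x:ℂ)) * ((l:ℂ)^k * Complex.exp (-b * (l:ℂ)^2 + I * l * x)))) := by
      congr 1
      funext l
      ring
    have h12 : Integrable (fun l : ℝ => (-2*b) * ((l:ℂ)^(k+1) * Complex.exp (-b * (l:ℂ)^2 + I * l * x))
        + (I*(x:ℂ)) * ((l:ℂ)^k * Complex.exp (-b * (l:ℂ)^2 + I * l * x))) volume := h1.add h2
    rw [hcongr, integral_add h0 h12, integral_add h1 h2, integral_const_mul, integral_const_mul,
      integral_const_mul]
  rw [hsplit] at key
  rw [eq_div_iff (mul_ne_zero two_ne_zero hb0)]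
  linear_combination -key

lemma cpow_half_sq (b : ℂ) (hb : 0 < b.re) : b ^ ((1:ℂ)/2) * b ^ ((1:ℂ)/2) = b := by
  have hb0 : b ≠ 0 := fun h => by simp [h] at hb
  rw [← Complex.cpow_add _ _ hb0]
  norm_num

lemma cpow_half_ne_zero (b : ℂ) (hb : 0 < b.re) : b ^ ((1:ℂ)/2) ≠ 0 := by
  have hb0 : b ≠ 0 := fun h => by simp [h] at hb
  simp [Complex.cpow_eq_zero_iff, hb0]

lemma pi_div_cpow_half (b : ℂ) (hb : 0 < b.re) :
    ((Real.pi:ℂ) / b) ^ ((1:ℂ)/2) = (Real.sqrt Real.pi : ℂ) * (b ^ ((1:ℂ)/2))⁻¹ := by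
  have hb0 : b ≠ 0 := fun h => by simp [h] at hb
  have hpi0 : (Real.pi:ℂ) ≠ 0 := by exact_mod_cast Real.pi_ne_zero
  have harg : b.arg ≠ Real.pi := by
    intro h
    rcases Complex.arg_eq_pi_iff.mp h with ⟨h1, -⟩
    linarith
  have h1 : ((Real.pi:ℂ)/b) ^ ((1:ℂ)/2) = (Real.pi:ℂ)^((1:ℂ)/2) * (b⁻¹)^((1:ℂ)/2) := by
    rw [div_eq_mul_inv, Complex.cpow_def_of_ne_zero (mul_ne_zero hpi0 (inv_ne_zero hb0)),
      Complex.cpow_def_of_ne_zero hpi0, Complex.cpow_def_of_ne_zero (inv_ne_zero hb0),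
      Complex.log_ofReal_mul Real.pi_pos (inv_ne_zero hb0), add_mul, Complex.exp_add,
      Complex.ofReal_log Real.pi_pos.le]
  rw [h1, Complex.inv_cpow _ _ harg]
  congr 1
  rw [Real.sqrt_eq_rpow, show ((1:ℂ)/2) = ((1/2:ℝ):ℂ) by norm_num]
  exact (Complex.ofReal_cpow Real.pi_pos.le _).symm

lemma J_zero (b : ℂ) (hb : 0 < b.re) (x : ℝ) :
    ∫ l : ℝ, Complex.exp (-b * (l:ℂ)^2 + I * l * x)
      = (Real.sqrt Real.pi : ℂ) * (b ^ ((1:ℂ)/2))⁻¹ * Complex.exp (-(x:ℂ)^2 / (4*b)) := by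
  have hb0 : b ≠ 0 := fun h => by simp [h] at hb
  have h := integral_cexp_quadratic (b := -b) (by simpa using hb) (I*(x:ℂ)) 0
  have heq : (∫ l : ℝ, Complex.exp (-b * (l:ℂ)^2 + I * l * x))
      = ∫ l : ℝ, Complex.exp ((-b) * (l:ℂ)^2 + (I*(x:ℂ)) * l + 0) := by
    congr 1
    funext l
    congr 1
    ring
  rw [heq, h, neg_neg, pi_div_cpow_half b hb]
  congr 1
  have : (0 : ℂ) - (I*(x:ℂ))^2 / (4 * -b) = -(x:ℂ)^2 / (4*b) := by
    rw [mul_pow, Complex.I_sq]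
    field_simp
    ring
  rw [this]

lemma J_eq (b : ℂ) (hb : 0 < b.re) (x : ℝ) (m : ℕ) :
    (∫ l : ℝ, (l:ℂ)^m * Complex.exp (-b * (l:ℂ)^2 + I * l * x))
      = (Real.sqrt Real.pi : ℂ) * Complex.exp (-(x:ℂ)^2/(4*b))
          * physHermite m (-(x:ℂ)/(2 * b ^ ((1:ℂ)/2)))
          / (Complex.I^m * (2:ℂ)^m * (b ^ ((1:ℂ)/2))^(m+1)) := by
  have hb0 : b ≠ 0 := fun h => by simp [h] at hb
  have hs2 := cpow_half_sq b hb
  have hs0 := cpow_half_ne_zero b hb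
  have hI2 : I * I = -1 := Complex.I_mul_I
  induction m using Nat.twoStepInduction with
  | zero =>
      simp only [physHermite, pow_zero, zero_add, pow_one, one_mul, mul_one]
      rw [J_zero b hb x]
      field_simp
  | one =>
      rw [J_rec b hb x 0]
      simp only [Nat.cast_zero, zero_mul, zero_add, pow_zero, one_mul]
      rw [J_zero b hb x]
      simp only [physHermite, pow_one]
      have h2b : (2:ℂ) * b ≠ 0 := mul_ne_zero two_ne_zero hb0
      field_simp
      linear_combination ((x:ℂ) * (b ^ ((1:ℂ)/2))^2) * hI2 - (x:ℂ) * hs2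
  | more j ih1 ih2 =>
      rw [J_rec b hb x (j+1)]
      simp only [Nat.add_sub_cancel]
      rw [ih1, ih2]
      simp only [physHermite]
      have h2b : (2:ℂ) * b ≠ 0 := mul_ne_zero two_ne_zero hb0
      push_cast
      field_simp
      set s := b ^ ((1:ℂ)/2) with hsdef
      set C := (Real.sqrt Real.pi : ℂ) * Complex.exp (-(x:ℂ)^2/(4*b)) with hCdef
      set P0 := physHermite j (-((x:ℂ)/(2*s))) with hP0
      set P1 := physHermite (j+1) (-((x:ℂ)/(2*s))) with hP1
      linear_combination
        (Complex.I^(2*j+1) * (((j:ℂ)+1) * P0 * (2:ℂ)^(2*j+3) * s^(2*j+6)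
          + (x:ℂ) * P1 * (2:ℂ)^(2*j+2) * s^(2*j+5))) * hI2
        + (2 * Complex.I^j * (2:ℂ)^j * s^(j+1) * Complex.I^(j+1) * (2:ℂ)^(j+1) * s^(j+2)
          * (-((x:ℂ) * P1) - ((j:ℂ)+1) * 2 * s * P0)) * hs2

end OscIntAux

theorem regularized_oscillatory_integral_closed_form (ε t x : ℝ) (hε : 0 < ε) (m : ℕ) :
    ∫ l : ℝ, (l : ℂ) ^ m *
        Complex.exp (-(Complex.I * (t : ℂ) + (ε : ℂ)) * (l : ℂ) ^ 2 + Complex.I * (l : ℂ) * (x : ℂ)) =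
      Complex.I ^ (-(m : ℤ)) * 2 ^ (-(m : ℤ)) * (Real.sqrt Real.pi : ℂ) *
        (Complex.I * (t : ℂ) + (ε : ℂ)) ^ (-((m : ℂ) + 1) / 2) *
        Complex.exp (-(x : ℂ) ^ 2 / (4 * (Complex.I * (t : ℂ) + (ε : ℂ)))) *
        physHermite m (-(x : ℂ) / (2 * (Complex.I * (t : ℂ) + (ε : ℂ)) ^ ((1 : ℂ) / 2))) := by
  have hb : (0:ℝ) < (Complex.I * (t:ℂ) + (ε:ℂ)).re := by
    simpa [Complex.add_re, Complex.mul_re] using hε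
  set b : ℂ := Complex.I * (t:ℂ) + (ε:ℂ) with hbdef
  have hb0 : b ≠ 0 := fun h => by simp [h] at hb
  have hs0 := OscIntAux.cpow_half_ne_zero b hb
  rw [OscIntAux.J_eq b hb x m]
  have hpow : b ^ (-((m : ℂ) + 1) / 2) = ((b ^ ((1:ℂ)/2))^(m+1))⁻¹ := by
    have he : (-((m : ℂ) + 1) / 2) = ((-((m+1 : ℕ) : ℤ) : ℤ) : ℂ) * ((1:ℂ)/2) := by
      push_cast
      ring
    rw [he, Complex.cpow_int_mul, zpow_neg, zpow_natCast]
  have hIz : Complex.I ^ (-(m:ℤ)) = (Complex.I ^ m)⁻¹ := by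
    rw [zpow_neg, zpow_natCast]
  have h2z : (2:ℂ) ^ (-(m:ℤ)) = ((2:ℂ) ^ m)⁻¹ := by
    rw [zpow_neg, zpow_natCast]
  rw [hpow, hIz, h2z]
  have hIm : Complex.I ^ m ≠ 0 := pow_ne_zero _ Complex.I_ne_zero
  have h2m : (2:ℂ) ^ m ≠ 0 := pow_ne_zero _ two_ne_zero
  have hsm : (b ^ ((1:ℂ)/2)) ^ (m+1) ≠ 0 := pow_ne_zero _ hs0
  field_simp
end
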